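/- There exists a constant C > 0 such that for all c ≥ 1 and all m ∈ (0,1], letting f(x) = 1 + m/(2|x|), F_c(u,v) = (c·cosh(v)·cos(u), c·cosh(v)·sin(u), c·v), n_c(u,v) = cosh(v)^{-1}·(cos(u), sin(u), −sinh(v)), ψ₀(v) = 1 − v·tanh(v), and A = π·∫_ℝ (1 − v·tanh(v))²·cosh²(v)·(cosh²(v)+v²)^{-3/2} dv, one has | ∫_{[0,2π]×ℝ} ψ₀(v) · (n_c(u,v) · ∇ log f (F_c(u,v))) · c²·cosh²(v) du dv + A·m | ≤ C·m²/c. -/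

import Mathlib

open RealInnerProductSpace

/-- A point of Euclidean ℝ³. -/
noncomputable def vec3 (a b c : ℝ) : EuclideanSpace ℝ (Fin 3) :=
  (WithLp.equiv 2 (Fin 3 → ℝ)).symm ![a, b, c]

/-!
Since `log f` is radial, `∇ log f (x) = -m x / (|x|² (2|x| + m))`. On the catenoid
`|F_c| = c √(cosh² v + v²)` and `⟪n_c, F_c⟫ = c ψ₀(v)`, so the integrand does not depend on `u` and
equals `-(m/2) g(v) / f(F_c)`, where `g` is the integrand of `A`. The left-hand side is therefore
`π m ∫ g (1 - 1/f(F_c))`, and `0 ≤ 1 - 1/f ≤ f - 1 = m / (2|F_c|) ≤ m / (2c)`; finally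
`g(v) ≤ ψ₀² / cosh v = O(1/(1 + v²))` is integrable.
-/

open Real MeasureTheory

theorem hasDerivAt_log_one_add_div {m r : ℝ} (hm : 0 ≤ m) (hr : 0 < r) :
    HasDerivAt (fun r => log (1 + m / (2 * r))) (-m / (r * (2 * r + m))) r := by
  have h := ((hasDerivAt_inv hr.ne').const_mul (m / 2)).const_add 1
  convert h.log (by positivity) using 1
  · funext r
    congr 1
    ring
  · field_simp

section RadialGradient

variable {E : Type*} [NormedAddCommGroup E] [InnerProductSpace ℝ E] [CompleteSpace E]

theorem hasGradientAt_comp_norm {φ : ℝ → ℝ} {φ' : ℝ} {x : E} (hx : x ≠ 0)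
    (hφ : HasDerivAt φ φ' ‖x‖) : HasGradientAt (fun y => φ ‖y‖) ((φ' / ‖x‖) • x) x := by
  have hnx : 0 < ‖x‖ := norm_pos_iff.mpr hx
  have hsqrt : HasDerivAt (fun t => φ √t) (φ' * (1 / (2 * ‖x‖))) (‖x‖ ^ 2) := by
    have h := Real.hasDerivAt_sqrt (pow_pos hnx 2).ne'
    rw [Real.sqrt_sq hnx.le] at h
    exact (Real.sqrt_sq hnx.le ▸ hφ).comp _ h
  have hfun : (fun y : E => φ ‖y‖) = (fun t => φ √t) ∘ fun y => ‖y‖ ^ 2 := by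
    funext y
    simp [Real.sqrt_sq (norm_nonneg y)]
  rw [hasGradientAt_iff_hasFDerivAt, hfun]
  refine (hsqrt.comp_hasFDerivAt x (hasStrictFDerivAt_norm_sq x).hasFDerivAt).congr_fderiv ?_
  ext y
  simp only [one_div, mul_inv_rev, smul_apply, coe_innerSL_apply, nsmul_eq_mul, Nat.cast_ofNat,
    smul_eq_mul, map_smul, InnerProductSpace.toDual_apply_apply]
  field_simp

theorem gradient_log_one_add_div_norm {m : ℝ} (hm : 0 ≤ m) {x : E} (hx : x ≠ 0) :
    gradient (fun y : E => log (1 + m / (2 * ‖y‖))) x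
      = (-m / (‖x‖ ^ 2 * (2 * ‖x‖ + m))) • x := by
  have hnx : 0 < ‖x‖ := norm_pos_iff.mpr hx
  rw [(hasGradientAt_comp_norm hx (hasDerivAt_log_one_add_div hm hnx)).gradient]
  congr 1
  field_simp

end RadialGradient

theorem setIntegral_prod_univ_snd {α β E : Type*} [MeasurableSpace α] [MeasurableSpace β]
    [NormedAddCommGroup E] [NormedSpace ℝ E] {μ : Measure α} {ν : Measure β} [SFinite μ]
    [SFinite ν] (s : Set α) (f : β → E) :
    ∫ p in s ×ˢ Set.univ, f p.2 ∂μ.prod ν = μ.real s • ∫ y, f y ∂ν := by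
  rw [← Measure.prod_restrict, Measure.restrict_univ, integral_fun_snd,
    measureReal_restrict_apply_univ]

theorem sub_div_one_add_le {a t : ℝ} (ha : 0 ≤ a) (ht : 0 ≤ t) : a - a / (1 + t) ≤ t * a := by
  have h : a - a / (1 + t) = t * a / (1 + t) := by
    field_simp
    ring
  rw [h]
  exact div_le_self (by positivity) (le_add_of_nonneg_right ht)

theorem abs_integral_sub_integral_div_one_add_le {α : Type*} [MeasurableSpace α] {μ : Measure α}
    {g ε : α → ℝ} {δ : ℝ} (hg : Integrable g μ) (hg0 : ∀ x, 0 ≤ g x) (hε : AEMeasurable ε μ)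
    (hε0 : ∀ x, 0 ≤ ε x) (hεδ : ∀ x, ε x ≤ δ) :
    |∫ x, g x ∂μ - ∫ x, g x / (1 + ε x) ∂μ| ≤ δ * ∫ x, g x ∂μ := by
  have hle : ∀ x, g x / (1 + ε x) ≤ g x := fun x =>
    div_le_self (hg0 x) (le_add_of_nonneg_right (hε0 x))
  have hq : Integrable (fun x => g x / (1 + ε x)) μ :=
    hg.mono' (hg.1.aemeasurable.div (aemeasurable_const.add hε)).aestronglyMeasurable <|
      ae_of_all _ fun x => by
        rw [norm_of_nonneg (div_nonneg (hg0 x) (by linarith [hε0 x]))]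
        exact hle x
  rw [← integral_sub hg hq, abs_of_nonneg (integral_nonneg fun x => sub_nonneg.mpr (hle x)),
    ← integral_const_mul]
  refine integral_mono (hg.sub hq) (hg.const_mul δ) fun x => ?_
  exact (sub_div_one_add_le (hg0 x) (hε0 x)).trans
    (mul_le_mul_of_nonneg_right (hεδ x) (hg0 x))

theorem inner_vec3 (a b c d e f : ℝ) :
    ⟪vec3 a b c, vec3 d e f⟫ = a * d + b * e + c * f := by
  simp [vec3, PiLp.inner_apply, Fin.sum_univ_three]
  ring

theorem norm_vec3 (a b c : ℝ) : ‖vec3 a b c‖ = √(a ^ 2 + b ^ 2 + c ^ 2) := by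
  simp [vec3, EuclideanSpace.norm_eq, Fin.sum_univ_three]

noncomputable def catenoidRadius (v : ℝ) : ℝ := √(cosh v ^ 2 + v ^ 2)

theorem one_le_catenoidRadius (v : ℝ) : 1 ≤ catenoidRadius v :=
  Real.one_le_sqrt.mpr (by nlinarith [one_le_cosh v, sq_nonneg v])

theorem norm_catenoid {c : ℝ} (hc : 0 ≤ c) (u v : ℝ) :
    ‖vec3 (c * cosh v * cos u) (c * cosh v * sin u) (c * v)‖ = c * catenoidRadius v := by
  have hsum : (c * cosh v * cos u) ^ 2 + (c * cosh v * sin u) ^ 2 + (c * v) ^ 2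
      = c ^ 2 * (cosh v ^ 2 + v ^ 2) := by
    linear_combination (c ^ 2 * cosh v ^ 2) * sin_sq_add_cos_sq u
  rw [norm_vec3, hsum, Real.sqrt_mul (sq_nonneg c), Real.sqrt_sq hc, catenoidRadius]

theorem inner_catenoidNormal_catenoid (c u v : ℝ) :
    ⟪vec3 ((cosh v)⁻¹ * cos u) ((cosh v)⁻¹ * sin u) ((cosh v)⁻¹ * -sinh v),
      vec3 (c * cosh v * cos u) (c * cosh v * sin u) (c * v)⟫ = c * (1 - v * tanh v) := by
  have := (cosh_pos v).ne'
  rw [inner_vec3, tanh_eq_sinh_div_cosh]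
  field_simp
  linear_combination cosh v * c * sin_sq_add_cos_sq u

noncomputable def catenoidFluxDensity (v : ℝ) : ℝ :=
  (1 - v * tanh v) ^ 2 * cosh v ^ 2 / (cosh v ^ 2 + v ^ 2) ^ ((3 : ℝ) / 2)

theorem catenoidFluxDensity_eq (v : ℝ) :
    catenoidFluxDensity v = (1 - v * tanh v) ^ 2 * cosh v ^ 2 / catenoidRadius v ^ 3 := by
  rw [catenoidFluxDensity, catenoidRadius, Real.sqrt_eq_rpow,
    ← Real.rpow_natCast ((cosh v ^ 2 + v ^ 2) ^ (1 / 2 : ℝ)) 3, ← Real.rpow_mul (by positivity)]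
  norm_num

theorem catenoidFluxDensity_nonneg (v : ℝ) : 0 ≤ catenoidFluxDensity v := by
  rw [catenoidFluxDensity_eq]
  have := one_le_catenoidRadius v
  positivity

theorem cosh_le_catenoidRadius (v : ℝ) : cosh v ≤ catenoidRadius v :=
  Real.le_sqrt_of_sq_le (by nlinarith [sq_nonneg v])

theorem sq_one_add_sq_le_cosh (v : ℝ) : (1 + v ^ 2) ^ 2 ≤ 98 * cosh v := by
  have hv4 : v ^ 4 / 24 ≤ 2 * cosh v := by
    have hexp := Real.pow_div_factorial_le_exp |v| (abs_nonneg v) 4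
    rw [Even.pow_abs ⟨2, rfl⟩, show ((Nat.factorial 4 : ℕ) : ℝ) = 24 by norm_num [Nat.factorial]]
      at hexp
    rw [← cosh_abs, cosh_eq]
    linarith [exp_pos (-|v|)]
  nlinarith [one_le_cosh v, sq_nonneg (v ^ 2 - 1)]

theorem catenoidFluxDensity_le (v : ℝ) : catenoidFluxDensity v ≤ 196 * (1 + v ^ 2)⁻¹ := by
  have hcosh := cosh_pos v
  have hψ : (1 - v * tanh v) ^ 2 ≤ 2 * (1 + v ^ 2) := by
    have ht : tanh v ^ 2 ≤ 1 := (sq_le_one_iff_abs_le_one _).mpr (abs_tanh_lt_one v).le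
    nlinarith [sq_nonneg (1 + v * tanh v), mul_le_mul_of_nonneg_left ht (sq_nonneg v)]
  calc catenoidFluxDensity v ≤ 2 * (1 + v ^ 2) * cosh v ^ 2 / cosh v ^ 3 := by
        rw [catenoidFluxDensity_eq]
        gcongr
        exact cosh_le_catenoidRadius v
    _ ≤ 196 * (1 + v ^ 2)⁻¹ := by
        rw [div_le_iff₀ (by positivity)]
        field_simp
        nlinarith [sq_one_add_sq_le_cosh v]

theorem measurable_catenoidFluxDensity : Measurable catenoidFluxDensity := by
  unfold catenoidFluxDensity
  simp_rw [tanh_eq_sinh_div_cosh]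
  fun_prop

theorem integrable_catenoidFluxDensity : Integrable catenoidFluxDensity :=
  (integrable_inv_one_add_sq.const_mul 196).mono'
    measurable_catenoidFluxDensity.aestronglyMeasurable <| ae_of_all _ fun v => by
      rw [norm_of_nonneg (catenoidFluxDensity_nonneg v)]
      exact catenoidFluxDensity_le v

noncomputable def catenoidFluxIntegrand (m c u v : ℝ) : ℝ :=
  (1 - v * tanh v) *
    ⟪vec3 ((cosh v)⁻¹ * cos u) ((cosh v)⁻¹ * sin u) ((cosh v)⁻¹ * (-sinh v)),
      gradient (fun x : EuclideanSpace ℝ (Fin 3) => log (1 + m / (2 * ‖x‖)))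
        (vec3 (c * cosh v * cos u) (c * cosh v * sin u) (c * v))⟫ *
    (c ^ 2 * cosh v ^ 2)

theorem catenoidFluxIntegrand_eq {m c : ℝ} (hm : 0 ≤ m) (hc : 0 < c) (u v : ℝ) :
    catenoidFluxIntegrand m c u v
      = -(m / 2) * (catenoidFluxDensity v / (1 + m / (2 * (c * catenoidRadius v)))) := by
  have hρ := one_le_catenoidRadius v
  have hF := norm_catenoid hc.le u v
  have hF0 : vec3 (c * cosh v * cos u) (c * cosh v * sin u) (c * v) ≠ 0 := by
    rw [← norm_pos_iff, hF]
    positivity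
  rw [catenoidFluxIntegrand, gradient_log_one_add_div_norm hm hF0, real_inner_smul_right,
    inner_catenoidNormal_catenoid, hF, catenoidFluxDensity_eq]
  field_simp

theorem setIntegral_catenoidFluxIntegrand {m c : ℝ} (hm : 0 ≤ m) (hc : 0 < c) :
    ∫ p in Set.Icc 0 (2 * π) ×ˢ Set.univ, catenoidFluxIntegrand m c p.1 p.2
      = -(π * m) * ∫ v, catenoidFluxDensity v / (1 + m / (2 * (c * catenoidRadius v))) := by
  simp_rw [catenoidFluxIntegrand_eq hm hc]
  rw [Measure.volume_eq_prod, setIntegral_prod_univ_snd _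
      fun v => -(m / 2) * (catenoidFluxDensity v / (1 + m / (2 * (c * catenoidRadius v)))),
    Real.volume_real_Icc_of_le two_pi_pos.le, integral_const_mul, smul_eq_mul]
  ring

theorem flux_integral_expansion :
    ∃ C > 0, ∀ c : ℝ, 1 ≤ c → ∀ m : ℝ, 0 < m → m ≤ 1 →
      |(∫ p in (Set.Icc (0 : ℝ) (2 * Real.pi)) ×ˢ (Set.univ : Set ℝ),
          (1 - p.2 * Real.tanh p.2) *
            ⟪vec3 ((Real.cosh p.2)⁻¹ * Real.cos p.1) ((Real.cosh p.2)⁻¹ * Real.sin p.1)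
                ((Real.cosh p.2)⁻¹ * (-Real.sinh p.2)),
              gradient (fun x : EuclideanSpace ℝ (Fin 3) => Real.log (1 + m / (2 * ‖x‖)))
                (vec3 (c * Real.cosh p.2 * Real.cos p.1) (c * Real.cosh p.2 * Real.sin p.1)
                  (c * p.2))⟫ *
            (c ^ 2 * Real.cosh p.2 ^ 2))
        + (Real.pi * ∫ v : ℝ,
            (1 - v * Real.tanh v) ^ 2 * Real.cosh v ^ 2
              / (Real.cosh v ^ 2 + v ^ 2) ^ ((3 : ℝ) / 2)) * m|
      ≤ C * m ^ 2 / c := by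
  have hA : 0 ≤ ∫ v, catenoidFluxDensity v := integral_nonneg catenoidFluxDensity_nonneg
  refine ⟨π / 2 * (∫ v, catenoidFluxDensity v) + 1, by positivity, fun c hc m hm _ => ?_⟩
  have hc0 : 0 < c := one_pos.trans_le hc
  have hε_le : ∀ v, m / (2 * (c * catenoidRadius v)) ≤ m / (2 * c) := fun v => by
    gcongr
    exact le_mul_of_one_le_right hc0.le (one_le_catenoidRadius v)
  have hgap := abs_integral_sub_integral_div_one_add_le integrable_catenoidFluxDensity
    catenoidFluxDensity_nonneg (by unfold catenoidRadius; fun_prop)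
    (fun v => by have := one_le_catenoidRadius v; positivity) hε_le
  change |(∫ p in Set.Icc 0 (2 * π) ×ˢ Set.univ, catenoidFluxIntegrand m c p.1 p.2)
    + (π * ∫ v, catenoidFluxDensity v) * m| ≤ _
  rw [setIntegral_catenoidFluxIntegrand hm.le hc0,
    show ∀ a b : ℝ, -(π * m) * b + π * a * m = π * m * (a - b) by intros; ring, abs_mul,
    abs_of_pos (by positivity : 0 < π * m)]
  calc _ ≤ π * m * (m / (2 * c) * ∫ v, catenoidFluxDensity v) := by gcongr
    _ ≤ (π / 2 * (∫ v, catenoidFluxDensity v) + 1) * m ^ 2 / c := by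
        field_simp
        nlinarith [pi_pos]
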